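/- arXiv:1412.7552 — 3 statements merged into one kernel-verified Lean document; each statement's English description precedes it below -/
import Mathlib

section
/- Let A be a real m × n matrix of rank n (n ≤ m), and let α ∈ (0,1). Then there exist a matrix S ∈ R^{m×n} whose columns are unit vectors with all pairwise inner products equal to α, and an upper triangular matrix R ∈ R^{n×n}, such that A = S R. -/
/-!
Since `A` has full column rank, `Aᴴ A` is positive definite; so is the equiangular Gram matrix
`G = (1 - α) I + α 𝟙𝟙ᵀ` for `0 ≤ α < 1`. Cholesky factorizations `Aᴴ A = U_Aᴴ U_A` and
`G = U_Gᴴ U_G` give `S = A U_A⁻¹ U_G`, whose Gram matrix is `G`, and the upper triangular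
`R = U_G⁻¹ U_A` with `A = S R`.
-/

open scoped ComplexOrder

namespace Matrix

theorem mulVec_injective_of_rank_eq_card {K m n : Type*} [Field K] [Fintype n]
    {A : Matrix m n K} (hA : A.rank = Fintype.card n) : Function.Injective A.mulVec := by
  have hker : Module.finrank K (LinearMap.ker A.mulVecLin) = 0 := by
    have := LinearMap.finrank_range_add_finrank_ker A.mulVecLin
    rw [Module.finrank_fintype_fun_eq_card] at this
    unfold Matrix.rank at hA
    omega
  rwa [Submodule.finrank_eq_zero, LinearMap.ker_eq_bot] at hker

variable {𝕜 : Type*} [RCLike 𝕜]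

theorem PosDef.exists_upperTriangular_conjTranspose_mul_self_eq {n : Type*} [Fintype n]
    [LinearOrder n] [WellFoundedLT n] [LocallyFiniteOrderBot n] {P : Matrix n n 𝕜}
    (hP : P.PosDef) : ∃ U : Matrix n n 𝕜, U.BlockTriangular id ∧ IsUnit U ∧ Uᴴ * U = P := by
  classical
  let L := LDL.lower hP
  let d := LDL.diagEntries hP
  have hd_pos : ∀ i, 0 < d i := by
    have hdiag : (LDL.diag hP).PosDef := by
      rw [LDL.diag_eq_lowerInv_conj, ← star_eq_conjTranspose,
        IsUnit.posDef_star_right_conjugate_iff (isUnit_of_invertible _)]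
      exact hP
    exact posDef_diagonal_iff.mp hdiag
  have hL_lower : L.BlockTriangular OrderDual.toDual :=
    blockTriangular_inv_of_blockTriangular fun _ _ hij => LDL.lowerInv_triangular hP hij
  let s : n → 𝕜 := fun i => (√(RCLike.re (d i)) : 𝕜)
  have hs_pos : ∀ i, s i ≠ 0 := fun i => by
    simpa [s] using (Real.sqrt_pos.mpr (RCLike.pos_iff.mp (hd_pos i)).1).ne'
  have hs_sq : ∀ i, star (s i) * s i = d i := fun i => by
    obtain ⟨hre, him⟩ := RCLike.pos_iff.mp (hd_pos i)
    rw [RCLike.star_def, RCLike.conj_ofReal, ← RCLike.ofReal_mul, Real.mul_self_sqrt hre.le]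
    exact RCLike.conj_eq_iff_re.mp (RCLike.conj_eq_iff_im.mpr him)
  refine ⟨diagonal s * Lᴴ, ?_, ?_, ?_⟩
  · intro i j hji
    simp [hL_lower hji]
  · refine (isUnit_diagonal.mpr (Pi.isUnit_iff.mpr fun i => (hs_pos i).isUnit)).mul ?_
    exact (isUnit_conjTranspose _).mpr (isUnit_nonsing_inv_iff.mpr (isUnit_of_invertible _))
  · calc (diagonal s * Lᴴ)ᴴ * (diagonal s * Lᴴ)
          = L * diagonal (fun i => star (s i) * s i) * Lᴴ := by
          simp only [conjTranspose_mul, conjTranspose_conjTranspose, diagonal_conjTranspose,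
            Matrix.mul_assoc]
          rw [← Matrix.mul_assoc (diagonal _), diagonal_mul_diagonal]
          rfl
      _ = P := by simp only [hs_sq]; exact LDL.lower_conj_diag hP

theorem exists_conjTranspose_mul_self_eq_and_eq_mul_upperTriangular {m n : Type*} [Fintype m]
    [Fintype n] [LinearOrder n] [WellFoundedLT n] [LocallyFiniteOrderBot n]
    {A : Matrix m n 𝕜} (hA : Function.Injective A.mulVec) {G : Matrix n n 𝕜} (hG : G.PosDef) :
    ∃ (S : Matrix m n 𝕜) (R : Matrix n n 𝕜), Sᴴ * S = G ∧ R.BlockTriangular id ∧ A = S * R := by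
  classical
  obtain ⟨UA, hUA_tri, hUA_unit, hUA⟩ :=
    (PosDef.conjTranspose_mul_self A hA).exists_upperTriangular_conjTranspose_mul_self_eq
  obtain ⟨UG, hUG_tri, hUG_unit, hUG⟩ := hG.exists_upperTriangular_conjTranspose_mul_self_eq
  have := hUA_unit.invertible
  have := hUG_unit.invertible
  refine ⟨A * UA⁻¹ * UG, UG⁻¹ * UA, ?_, ?_, ?_⟩
  · calc (A * UA⁻¹ * UG)ᴴ * (A * UA⁻¹ * UG) = UGᴴ * UA⁻¹ᴴ * (Aᴴ * A) * UA⁻¹ * UG := by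
          simp only [conjTranspose_mul, Matrix.mul_assoc]
      _ = UGᴴ * UG := by
          rw [← hUA, conjTranspose_nonsing_inv]
          simp only [Matrix.mul_assoc, inv_mul_cancel_left_of_invertible,
            mul_inv_cancel_left_of_invertible]
      _ = G := hUG
  · exact (blockTriangular_inv_of_blockTriangular hUG_tri).mul hUA_tri
  · rw [Matrix.mul_assoc, mul_inv_cancel_left_of_invertible, inv_mul_cancel_right_of_invertible]

variable (n : Type*) [DecidableEq n]

def equiangularGram (α : ℝ) : Matrix n n ℝ := of fun i j => if i = j then 1 else α

variable {n}

theorem posDef_equiangularGram [Finite n] {α : ℝ} (hα0 : 0 ≤ α) (hα1 : α < 1) :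
    (equiangularGram n α).PosDef := by
  have : equiangularGram n α = (1 - α) • 1 + α • vecMulVec (fun _ => 1) (star fun _ => 1) := by
    ext i j
    by_cases h : i = j <;> simp [equiangularGram, h, vecMulVec_apply]
  rw [this]
  exact (PosDef.one.smul (sub_pos.mpr hα1)).add_posSemidef
    ((posSemidef_vecMulVec_self_star _).smul hα0)

end Matrix

theorem SR_factorization_general (m n : ℕ)
    (A : Matrix (Fin m) (Fin n) ℝ) (hrank : A.rank = n)
    (α : ℝ) (hα0 : 0 < α) (hα1 : α < 1) :
    ∃ (S : Matrix (Fin m) (Fin n) ℝ) (R : Matrix (Fin n) (Fin n) ℝ),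
      (∀ j, ∑ i, S i j * S i j = 1) ∧
      (∀ j j', j ≠ j' → ∑ i, S i j * S i j' = α) ∧
      R.BlockTriangular id ∧ A = S * R := by
  have hA : Function.Injective A.mulVec :=
    Matrix.mulVec_injective_of_rank_eq_card (by rwa [Fintype.card_fin])
  obtain ⟨S, R, hS, hR, hSR⟩ :=
    Matrix.exists_conjTranspose_mul_self_eq_and_eq_mul_upperTriangular hA
      (Matrix.posDef_equiangularGram hα0.le hα1)
  have hentry (j j' : Fin n) : ∑ i, S i j * S i j' = if j = j' then 1 else α := by
    simpa [Matrix.mul_apply, Matrix.equiangularGram] using congrFun₂ hS j j'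
  refine ⟨S, R, fun j => ?_, fun j j' hjj' => ?_, hR, hSR⟩
  · simpa using hentry j j
  · simpa [hjj'] using hentry j j'

theorem SR_factorization (m n : ℕ) (hnm : n ≤ m)
    (A : Matrix (Fin m) (Fin n) ℝ) (hrank : A.rank = n)
    (α : ℝ) (hα0 : 0 < α) (hα1 : α < 1) :
    ∃ (S : Matrix (Fin m) (Fin n) ℝ) (R : Matrix (Fin n) (Fin n) ℝ),
      (∀ j, ∑ i, S i j * S i j = 1) ∧
      (∀ j j', j ≠ j' → ∑ i, S i j * S i j' = α) ∧
      R.BlockTriangular id ∧ A = S * R :=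
  SR_factorization_general m n A hrank α hα0 hα1
end

section
/- Let S ∈ R^{n×n} (n ≥ 2) have unit columns with pairwise inner products all equal to α ∈ (0,1). Let s'_1, ..., s'_n be the rows of S^{−1}. Then for every i, ‖s'_i‖ = √k where k = (1+(n−2)α)/((1−α)(1+(n−1)α)), and for all i ≠ j, ⟨s'_i, s'_j⟩/(‖s'_i‖‖s'_j‖) = −α/(1+(n−2)α). In particular the rows of S^{−1} are equiangular with an obtuse common angle. -/
/-!
Writing `J` for the all-ones matrix, the hypotheses say `Sᵀ S = (1 - α) I + α J`. The Gram matrix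
of the rows of `S⁻¹` is `S⁻¹ S⁻ᵀ = (Sᵀ S)⁻¹`, and since `J² = n J` the inverse of `a I + b J` is
again of this shape: `(1 - α)⁻¹ I - α / ((1 - α)(1 + (n - 1) α)) J`. Its diagonal entries are `k`
and its off-diagonal entries are `-α / ((1 - α)(1 + (n - 1) α))`, whose quotient by `k` is the
stated cosine.
-/

open Matrix

namespace Matrix

section AllOnes

variable {ι K : Type*} [Fintype ι] [Field K]

theorem of_one_mul_of_one : (of 1 : Matrix ι ι K) * of 1 = (Fintype.card ι : K) • of 1 := by
  ext i j
  simp [mul_apply]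

variable [DecidableEq ι]

theorem smul_one_add_smul_of_one_mul (a b c d : K) :
    (a • 1 + b • of 1 : Matrix ι ι K) * (c • 1 + d • of 1) =
      (a * c) • 1 + (a * d + b * c + Fintype.card ι * b * d) • of 1 := by
  simp only [add_mul, mul_add, smul_mul_smul_comm, mul_one, one_mul, of_one_mul_of_one, smul_smul]
  module

theorem inv_smul_one_add_smul_of_one {a b : K} (ha : a ≠ 0) (hab : a + Fintype.card ι * b ≠ 0) :
    (a • 1 + b • of 1 : Matrix ι ι K)⁻¹ =
      a⁻¹ • 1 + (-b / (a * (a + Fintype.card ι * b))) • of 1 := by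
  refine inv_eq_right_inv ?_
  have hcoeff : a * (-b / (a * (a + Fintype.card ι * b))) + b * a⁻¹ +
      Fintype.card ι * b * (-b / (a * (a + Fintype.card ι * b))) = 0 := by
    simp only [div_eq_mul_inv, mul_inv]
    linear_combination (-b * a⁻¹) * mul_inv_cancel₀ hab
  rw [smul_one_add_smul_of_one_mul, mul_inv_cancel₀ ha, hcoeff, one_smul, zero_smul, add_zero]

end AllOnes

theorem transpose_mul_self_apply {m n R : Type*} [Fintype m] [NonUnitalNonAssocSemiring R]
    (A : Matrix m n R) (j j' : n) : (Aᵀ * A) j j' = ∑ i, A i j * A i j' := by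
  simp [mul_apply]

theorem mul_transpose_self_apply {m n R : Type*} [Fintype n] [NonUnitalNonAssocSemiring R]
    (A : Matrix m n R) (i i' : m) : (A * Aᵀ) i i' = ∑ j, A i j * A i' j := by
  simp [mul_apply]

theorem transpose_mul_self_eq_of_equiangular {m n R : Type*} [Fintype m] [DecidableEq n]
    [CommRing R] {A : Matrix m n R} {α : R} (hunit : ∀ j, ∑ i, A i j * A i j = 1)
    (hang : ∀ j j', j ≠ j' → ∑ i, A i j * A i j' = α) :
    Aᵀ * A = (1 - α) • 1 + α • of 1 := by
  ext j j'
  rw [transpose_mul_self_apply]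
  rcases eq_or_ne j j' with rfl | hjj'
  · simp [hunit]
  · simp [hang j j' hjj', hjj']

/-- No invertibility is needed: for singular `A` both sides are `0`. -/
theorem inv_mul_transpose_inv {n R : Type*} [Fintype n] [DecidableEq n] [CommRing R]
    (A : Matrix n n R) : A⁻¹ * A⁻¹ᵀ = (Aᵀ * A)⁻¹ := by
  rw [transpose_nonsing_inv, mul_inv_rev]

end Matrix

theorem inverse_rows_equiangular (n : ℕ) (hn : 2 ≤ n) (α : ℝ) (hα0 : 0 < α) (hα1 : α < 1)
    (S : Matrix (Fin n) (Fin n) ℝ)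
    (hunit : ∀ j, ∑ i, S i j * S i j = 1)
    (hang : ∀ j j', j ≠ j' → ∑ i, S i j * S i j' = α)
    (k : ℝ)
    (hk : k = (1 + ((n : ℝ) - 2) * α) / ((1 - α) * (1 + ((n : ℝ) - 1) * α))) :
    (∀ i, Real.sqrt (∑ j, S⁻¹ i j * S⁻¹ i j) = Real.sqrt k) ∧
    (∀ i i', i ≠ i' →
      (∑ j, S⁻¹ i j * S⁻¹ i' j) /
        (Real.sqrt (∑ j, S⁻¹ i j * S⁻¹ i j) * Real.sqrt (∑ j, S⁻¹ i' j * S⁻¹ i' j)) =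
      -α / (1 + ((n : ℝ) - 2) * α)) := by
  have hn' : (2 : ℝ) ≤ n := by exact_mod_cast hn
  set c : ℝ := 1 + ((n : ℝ) - 1) * α
  have h1α : 0 < 1 - α := by linarith
  have hc : 0 < c := by nlinarith
  have hcα : 1 + ((n : ℝ) - 2) * α = c - α := by ring
  have hk_pos : 0 < k := by rw [hk, hcα]; exact div_pos (by nlinarith) (mul_pos h1α hc)
  have hcard : (1 - α) + Fintype.card (Fin n) * α = c := by rw [Fintype.card_fin]; ring
  have hrows (i i' : Fin n) : ∑ j, S⁻¹ i j * S⁻¹ i' j =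
      (1 - α)⁻¹ * (1 : Matrix (Fin n) (Fin n) ℝ) i i' - α / ((1 - α) * c) := by
    rw [← mul_transpose_self_apply, inv_mul_transpose_inv,
      transpose_mul_self_eq_of_equiangular hunit hang,
      inv_smul_one_add_smul_of_one h1α.ne' (hcard ▸ hc.ne'), hcard]
    simp [neg_div, sub_eq_add_neg]
  have hdiag (i : Fin n) : ∑ j, S⁻¹ i j * S⁻¹ i j = k := by
    rw [hrows, one_apply_eq, hk, hcα]
    field_simp
  refine ⟨fun i => by rw [hdiag], fun i i' hii' => ?_⟩
  rw [hrows, one_apply_ne hii', mul_zero, zero_sub, hdiag, hdiag, Real.mul_self_sqrt hk_pos.le,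
    hk, hcα]
  field_simp
end

section
/- Let A ∈ R^{n×n} be symmetric with exactly two distinct eigenvalues β and γ = β + n(1−β), where 0 < β < 1 < γ and β has multiplicity n−1. Then, with α = 1−β, there exists a matrix Ŝ ∈ R^{n×n} with unit columns of pairwise inner product α such that A = Ŝ Ŝ^T. -/
open Matrix

private lemma myOrthoCols {n : ℕ} (U : Matrix (Fin n) (Fin n) ℝ)
    (hU : U ∈ Matrix.unitaryGroup (Fin n) ℝ) (a b : Fin n) :
    ∑ i, U i a * U i b = if a = b then (1:ℝ) else 0 := by
  have h1 : star U * U = 1 := hU.1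
  have h := congrFun (congrFun h1 a) b
  simpa [Matrix.mul_apply, Matrix.one_apply, Matrix.star_apply] using h

private lemma mySpecEntry {n : ℕ} {M : Matrix (Fin n) (Fin n) ℝ} (hM : M.IsHermitian)
    (i i' : Fin n) :
    M i i' = ∑ m, hM.eigenvalues m *
      ((hM.eigenvectorUnitary : Matrix (Fin n) (Fin n) ℝ) i m *
       (hM.eigenvectorUnitary : Matrix (Fin n) (Fin n) ℝ) i' m) := by
  conv_lhs => rw [hM.spectral_theorem]
  simp [Matrix.mul_apply, Matrix.diagonal_apply, Matrix.star_apply, Finset.sum_mul, mul_comm,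
    mul_assoc, mul_left_comm]

private lemma myKeySum {n : ℕ} (U : Fin n → Fin n → ℝ)
    (hU : ∀ a b, ∑ i, U i a * U i b = if a = b then (1:ℝ) else 0)
    (f g : Fin n → ℝ) :
    ∑ i, (∑ k, f k * U i k) * (∑ l, g l * U i l) = ∑ k, f k * g k := by
  have h1 : ∀ i : Fin n, (∑ k, f k * U i k) * (∑ l, g l * U i l)
      = ∑ k, ∑ l, (f k * g l) * (U i k * U i l) := by
    intro i
    rw [Finset.sum_mul_sum]
    exact Finset.sum_congr rfl fun k _ => Finset.sum_congr rfl fun l _ => by ring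
  calc ∑ i, (∑ k, f k * U i k) * (∑ l, g l * U i l)
      = ∑ k, ∑ l, (f k * g l) * ∑ i, U i k * U i l := by
        simp_rw [h1, Finset.mul_sum]
        rw [Finset.sum_comm]
        exact Finset.sum_congr rfl fun k _ => Finset.sum_comm ..
    _ = ∑ k, f k * g k := by
        simp_rw [hU]
        simp

theorem symmetric_two_eigenvalues_factorization (n : ℕ)
    (A : Matrix (Fin n) (Fin n) ℝ) (hA : A.IsHermitian)
    (β γ : ℝ) (hβ0 : 0 < β) (hβ1 : β < 1) (hγ : 1 < γ)
    (hγβ : γ = β + (n : ℝ) * (1 - β))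
    (heig : ∃ i₀ : Fin n, hA.eigenvalues i₀ = γ ∧ ∀ i, i ≠ i₀ → hA.eigenvalues i = β) :
    ∃ Shat : Matrix (Fin n) (Fin n) ℝ,
      (∀ j, ∑ i, Shat i j * Shat i j = 1) ∧
      (∀ j j', j ≠ j' → ∑ i, Shat i j * Shat i j' = 1 - β) ∧
      A = Shat * Shatᵀ := by
  obtain ⟨i₀, hμi₀, hμ⟩ := heig
  have hn : 0 < n := i₀.pos
  set μ : Fin n → ℝ := hA.eigenvalues with hμdef
  set V : Matrix (Fin n) (Fin n) ℝ := (hA.eigenvectorUnitary : Matrix (Fin n) (Fin n) ℝ) with hVdef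
  -- the target Gram matrix
  set G : Matrix (Fin n) (Fin n) ℝ :=
    Matrix.of (fun i j => if i = j then (1:ℝ) else 1 - β) with hGdef
  have hG : G.IsHermitian := by
    ext i j
    by_cases h : i = j
    · subst h; simp [G]
    · rw [Matrix.conjTranspose_apply]
      simp only [G, Matrix.of_apply, if_neg h, if_neg (Ne.symm h)]
      simp
  set ν : Fin n → ℝ := hG.eigenvalues with hνdef
  set W : Matrix (Fin n) (Fin n) ℝ := (hG.eigenvectorUnitary : Matrix (Fin n) (Fin n) ℝ) with hWdef
  have hVo := myOrthoCols V hA.eigenvectorUnitary.2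
  have hWo := myOrthoCols W hG.eigenvectorUnitary.2
  have hAe : ∀ i i', A i i' = ∑ m, μ m * (V i m * V i' m) := fun i i' => mySpecEntry hA i i'
  have hGe : ∀ j j', G j j' = ∑ k, ν k * (W j k * W j' k) := fun j j' => mySpecEntry hG j j'
  -- quadratic identity for G
  have hGalt : ∀ i k : Fin n, G i k = (1-β) + (if i = k then β else 0) := by
    intro i k
    by_cases h : i = k <;> simp [G, h] <;> ring
  have hGG : G * G = (β + γ) • G - (β * γ) • (1 : Matrix (Fin n) (Fin n) ℝ) := by
    ext i j
    have hprod : ∀ k, G i k * G k j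
        = (1-β)*(1-β) + (1-β)*(if k = j then β else 0) + (if i = k then β else 0)*(1-β)
          + (if k = i then (if i = j then β*β else 0) else 0) := by
      intro k
      rw [hGalt i k, hGalt k j]
      by_cases h1 : i = k <;> by_cases h2 : k = j
      · subst h1; subst h2; simp; try ring
      · subst h1; simp [h2]; try ring
      · subst h2; simp [h1, Ne.symm h1]; try ring
      · simp [h1, h2, Ne.symm h1]; try ring
    rw [Matrix.mul_apply]
    simp_rw [hprod]
    rw [Finset.sum_add_distrib, Finset.sum_add_distrib, Finset.sum_add_distrib]
    have s1 : ∑ _k : Fin n, (1-β)*(1-β) = (n:ℝ)*((1-β)*(1-β)) := by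
      simp [Finset.card_univ, mul_comm]
    have s2 : ∑ k, (1-β)*(if k = j then β else 0) = (1-β)*β := by
      rw [← Finset.mul_sum]; simp
    have s3 : ∑ k, (if i = k then β else 0)*(1-β) = β*(1-β) := by
      rw [← Finset.sum_mul]; simp
    have s4 : ∑ k, (if k = i then (if i = j then β*β else 0) else 0)
        = (if i = j then β*β else 0) := by simp
    rw [s1, s2, s3, s4]
    simp only [Matrix.sub_apply, Matrix.smul_apply, Matrix.one_apply, smul_eq_mul]
    rw [hGalt i j]
    by_cases h : i = j <;> simp [h] <;> rw [hγβ] <;> ring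
  -- eigenvalues of G satisfy the quadratic
  have hquad : ∀ j, (ν j - β) * (ν j - γ) = 0 := by
    intro j
    have hv0 : ⇑(hG.eigenvectorBasis j) ≠ 0 := by
      have h0 : hG.eigenvectorBasis j ≠ 0 := hG.eigenvectorBasis.orthonormal.ne_zero j
      intro h
      exact h0 (by ext i; exact congrFun h i)
    have h1 : G *ᵥ ⇑(hG.eigenvectorBasis j) = ν j • ⇑(hG.eigenvectorBasis j) :=
      hG.mulVec_eigenvectorBasis j
    have h2 : (G * G) *ᵥ ⇑(hG.eigenvectorBasis j)
        = (ν j * ν j) • ⇑(hG.eigenvectorBasis j) := by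
      rw [← Matrix.mulVec_mulVec, h1, Matrix.mulVec_smul, h1, smul_smul]
    have h3 : (G * G) *ᵥ ⇑(hG.eigenvectorBasis j)
        = ((β + γ) * ν j) • ⇑(hG.eigenvectorBasis j) - (β * γ) • ⇑(hG.eigenvectorBasis j) := by
      rw [hGG, Matrix.sub_mulVec, Matrix.smul_mulVec, Matrix.smul_mulVec, h1,
        Matrix.one_mulVec, smul_smul]
    have h4 : ((ν j - β) * (ν j - γ)) • ⇑(hG.eigenvectorBasis j) = 0 := by
      have hs : (ν j - β) * (ν j - γ)
          = ν j * ν j - ((β + γ) * ν j) + β * γ := by ring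
      rw [hs, add_smul, sub_smul, ← h2, h3]
      abel
    rcases smul_eq_zero.mp h4 with h | h
    · exact h
    · exact absurd h hv0
  -- trace of G
  have htr : ∑ j, ν j = (n : ℝ) := by
    have h1 : ∑ j, G j j = (n : ℝ) := by
      have : ∀ j : Fin n, G j j = 1 := by intro j; simp [G]
      simp [this, Finset.card_univ]
    have h2 : ∑ j, G j j = ∑ j, ν j :=
      calc ∑ j, G j j = ∑ j, ∑ k, ν k * (W j k * W j k) :=
            Finset.sum_congr rfl fun j _ => hGe j j
        _ = ∑ k, ν k * ∑ j, W j k * W j k := by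
            rw [Finset.sum_comm]
            exact Finset.sum_congr rfl fun k _ => by rw [Finset.mul_sum]
        _ = ∑ j, ν j := by
            simp_rw [hWo]
            simp
    rw [← h1]
    exact h2.symm
  -- exactly one eigenvalue of G equals γ
  have hβγ : β ≠ γ := by linarith
  set S : Finset (Fin n) := Finset.univ.filter (fun j => ν j = γ) with hSdef
  have hScard : (S.card : ℝ) * γ + (((n : ℝ) - S.card)) * β = (n : ℝ) := by
    have hsplit := Finset.sum_filter_add_sum_filter_not Finset.univ (fun j => ν j = γ) ν
    rw [← hSdef] at hsplit
    have hS1 : ∑ j ∈ S, ν j = (S.card : ℝ) * γ :=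
      calc ∑ j ∈ S, ν j = ∑ _j ∈ S, γ :=
            Finset.sum_congr rfl fun j hj => (Finset.mem_filter.mp hj).2
        _ = (S.card : ℝ) * γ := by simp [mul_comm]
    have hb2 : ∀ j ∈ Finset.univ.filter (fun j => ¬ ν j = γ), ν j = β := by
      intro j hj
      have hj2 := (Finset.mem_filter.mp hj).2
      rcases mul_eq_zero.mp (hquad j) with h | h
      · exact sub_eq_zero.mp h
      · exact absurd (sub_eq_zero.mp h) hj2
    have hS2 : ∑ j ∈ Finset.univ.filter (fun j => ¬ ν j = γ), ν j
        = ((Finset.univ.filter (fun j => ¬ ν j = γ)).card : ℝ) * β :=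
      calc ∑ j ∈ Finset.univ.filter (fun j => ¬ ν j = γ), ν j
            = ∑ _j ∈ Finset.univ.filter (fun j => ¬ ν j = γ), β :=
            Finset.sum_congr rfl hb2
        _ = _ := by simp [mul_comm]
    have hcards : S.card + (Finset.univ.filter (fun j => ¬ ν j = γ)).card = n := by
      rw [hSdef, Finset.card_filter_add_card_filter_not]
      simp
    have hcc : ((Finset.univ.filter (fun j => ¬ ν j = γ)).card : ℝ) = (n : ℝ) - S.card := by
      have h := congrArg (Nat.cast (R := ℝ)) hcards
      push_cast at h
      linarith
    rw [hS1, hS2, hcc, htr] at hsplit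
    linarith
  have hcard1 : S.card = 1 := by
    have h1 : (S.card : ℝ) * (γ - β) = γ - β := by
      have hgb : γ - β = (n:ℝ) * (1 - β) := by rw [hγβ]; ring
      nlinarith [hScard]
    have h2 : γ - β ≠ 0 := sub_ne_zero.mpr (Ne.symm hβγ)
    have h3 : (S.card : ℝ) = 1 := mul_right_cancel₀ h2 (h1.trans (one_mul (γ - β)).symm)
    exact_mod_cast h3
  obtain ⟨j₀, hj₀⟩ := Finset.card_eq_one.mp hcard1
  have hνj₀ : ν j₀ = γ := by
    have : j₀ ∈ S := by rw [hj₀]; simp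
    exact (Finset.mem_filter.mp this).2
  have hνother : ∀ k, k ≠ j₀ → ν k = β := by
    intro k hk
    have hkS : k ∉ S := by rw [hj₀]; simp [hk]
    have hkγ : ν k ≠ γ := fun h => hkS (by rw [hSdef]; simp [h])
    rcases mul_eq_zero.mp (hquad k) with h | h
    · linarith [sub_eq_zero.mp h]
    · exact absurd (sub_eq_zero.mp h) hkγ
  have hνpos : ∀ k, 0 ≤ ν k := by
    intro k
    by_cases h : k = j₀
    · rw [h, hνj₀]; linarith
    · rw [hνother k h]; linarith
  -- the permutation matching eigenvalues of A and G
  set σ : Equiv.Perm (Fin n) := Equiv.swap j₀ i₀ with hσdef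
  have hσν : ∀ k, μ (σ k) = ν k := by
    intro k
    by_cases h : k = j₀
    · rw [h, hσdef]
      simp [Equiv.swap_apply_left, hμi₀, hνj₀]
    · have h1 : σ k ≠ i₀ := by
        intro he
        have : σ k = σ j₀ := by rw [he, hσdef]; simp [Equiv.swap_apply_left]
        exact h (σ.injective this)
      rw [hμ (σ k) h1, hνother k h]
  -- the matrix
  refine ⟨Matrix.of (fun i j => ∑ k, (Real.sqrt (ν k) * W j k) * V i (σ k)), ?_, ?_, ?_⟩
  · intro j
    have hVσ : ∀ a b, ∑ i, V i (σ a) * V i (σ b) = if a = b then (1:ℝ) else 0 := by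
      intro a b
      rw [hVo (σ a) (σ b)]
      simp [σ.injective.eq_iff]
    have := myKeySum (fun i k => V i (σ k)) hVσ
      (fun k => Real.sqrt (ν k) * W j k) (fun k => Real.sqrt (ν k) * W j k)
    simp only [Matrix.of_apply]
    rw [this]
    have : ∑ k, (Real.sqrt (ν k) * W j k) * (Real.sqrt (ν k) * W j k)
        = ∑ k, ν k * (W j k * W j k) := by
      refine Finset.sum_congr rfl fun k _ => ?_
      rw [show (Real.sqrt (ν k) * W j k) * (Real.sqrt (ν k) * W j k)
          = (Real.sqrt (ν k) * Real.sqrt (ν k)) * (W j k * W j k) from by ring,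
        Real.mul_self_sqrt (hνpos k)]
    rw [this, ← hGe j j]
    simp [G]
  · intro j j' hjj'
    have hVσ : ∀ a b, ∑ i, V i (σ a) * V i (σ b) = if a = b then (1:ℝ) else 0 := by
      intro a b
      rw [hVo (σ a) (σ b)]
      simp [σ.injective.eq_iff]
    have hks := myKeySum (fun i k => V i (σ k)) hVσ
      (fun k => Real.sqrt (ν k) * W j k) (fun k => Real.sqrt (ν k) * W j' k)
    simp only [Matrix.of_apply]
    rw [hks]
    have : ∑ k, (Real.sqrt (ν k) * W j k) * (Real.sqrt (ν k) * W j' k)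
        = ∑ k, ν k * (W j k * W j' k) := by
      refine Finset.sum_congr rfl fun k _ => ?_
      rw [show (Real.sqrt (ν k) * W j k) * (Real.sqrt (ν k) * W j' k)
          = (Real.sqrt (ν k) * Real.sqrt (ν k)) * (W j k * W j' k) from by ring,
        Real.mul_self_sqrt (hνpos k)]
    rw [this, ← hGe j j']
    simp [G, hjj']
  · ext i i'
    rw [Matrix.mul_apply]
    simp only [Matrix.transpose_apply, Matrix.of_apply]
    have hrw : ∀ j : Fin n, (∑ k, (Real.sqrt (ν k) * W j k) * V i (σ k))
        = ∑ k, (Real.sqrt (ν k) * V i (σ k)) * W j k := by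
      intro j
      exact Finset.sum_congr rfl fun k _ => by ring
    have hrw' : ∀ j : Fin n, (∑ k, (Real.sqrt (ν k) * W j k) * V i' (σ k))
        = ∑ k, (Real.sqrt (ν k) * V i' (σ k)) * W j k := by
      intro j
      exact Finset.sum_congr rfl fun k _ => by ring
    simp_rw [hrw, hrw']
    rw [myKeySum (fun j k => W j k) hWo
      (fun k => Real.sqrt (ν k) * V i (σ k)) (fun k => Real.sqrt (ν k) * V i' (σ k))]
    have h1 : ∑ k, (Real.sqrt (ν k) * V i (σ k)) * (Real.sqrt (ν k) * V i' (σ k))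
        = ∑ k, μ (σ k) * (V i (σ k) * V i' (σ k)) := by
      refine Finset.sum_congr rfl fun k _ => ?_
      rw [show (Real.sqrt (ν k) * V i (σ k)) * (Real.sqrt (ν k) * V i' (σ k))
          = (Real.sqrt (ν k) * Real.sqrt (ν k)) * (V i (σ k) * V i' (σ k)) from by ring,
        Real.mul_self_sqrt (hνpos k), hσν k]
    rw [h1]
    rw [Fintype.sum_equiv σ (fun k => μ (σ k) * (V i (σ k) * V i' (σ k)))
      (fun m => μ m * (V i m * V i' m)) (fun k => rfl)]
    exact hAe i i'
end
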